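/- arXiv:2605.14599 — 2 statements merged into one kernel-verified Lean document; each statement's English description precedes it below -/
import Mathlib

section
/- Empirical equivalence of MLE and Min-Max-IRL under deterministic dynamics (Theorem 1, part 1, empirical level): Suppose the dynamics are deterministic, i.e. P₀ = δ_{s̄} for some s̄ ∈ S and P_t(·|s,a) = δ_{f_t(s,a)} for measurable maps f_t : S×A → S, t = 1,…,T−1. Then for every bounded measurable reward r and every dynamically feasible trajectory τ = (s₁,a₁,…,s_T,a_T) (i.e. s₁ = s̄ and s_{t+1} = f_t(s_t,a_t) for t < T), the trajectory losses coincide: −β Σ_{t=1}^T log π*_{t,r}(a_t|s_t) = J*(r) − Σ_{t=1}^T r_t(s_t,a_t). Consequently, for any finite dataset of feasible trajectories τ¹,…,τⁿ, the empirical risks satisfy β · (1/n)Σ_{i=1}^n ( −Σ_{t=1}^T log π*_{t,r}(a_t^i|s_t^i) ) = J*(r) − (1/n)Σ_{i=1}^n Σ_{t=1}^T r_t(s_t^i,a_t^i) for every r. -/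
/-!
Along a feasible trajectory of deterministic dynamics the soft Bellman equation reads
`Q*_t(s_t, a_t) = r_t(s_t, a_t) + V*_{t+1}(s_{t+1})`, so
`β log π*_t(a_t | s_t) = r_t(s_t, a_t) + V*_{t+1}(s_{t+1}) - V*_t(s_t)`. Summing over `t`
telescopes to `Σ_t r_t(s_t, a_t) - V*_1(s̄)`, and `V*_1(s̄) = J*(r)` because `P₀ = δ_{s̄}`.
-/

open MeasureTheory ProbabilityTheory Real
open scoped ENNReal RealInnerProductSpace

noncomputable section

namespace IRL

variable {S A : Type*} [MeasurableSpace S] [MeasurableSpace A]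

/-- A reward tuple `(r_t)` of bounded measurable functions. -/
def IsBddReward (r : ℕ → S → A → ℝ) : Prop :=
  ∀ t, Measurable (fun q : S × A => r t q.1 q.2) ∧ ∃ C, ∀ s a, |r t s a| ≤ C

/-- `p` is a family of `ν`-probability densities of a Markov policy. -/
def IsPolicyDensity (ν : Measure A) (p : ℕ → S → A → ℝ) : Prop :=
  (∀ t, Measurable (fun q : S × A => p t q.1 q.2)) ∧ (∀ t s a, 0 ≤ p t s a) ∧
    (∀ t s, ∫ a, p t s a ∂ν = 1)

/-- the log-densities `log π_t` are bounded (in particular the densities are positive). -/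
def HasBddLogDensity (p : ℕ → S → A → ℝ) : Prop :=
  ∀ t, (∀ s a, 0 < p t s a) ∧ ∃ C, ∀ s a, |Real.log (p t s a)| ≤ C

variable (T : ℕ) (P : ℕ → Kernel (S × A) S) (ν : Measure A)

/-- Soft-optimal value function `V*_{t,r}` (backward recursion, `V* t ≡ 0` for `t > T`). -/
def Vstar (β : ℝ) (r : ℕ → S → A → ℝ) (t : ℕ) (s : S) : ℝ :=
  if T < t then 0
  else β * Real.log (∫ a, Real.exp ((r t s a + ∫ s', Vstar β r (t + 1) s' ∂(P t (s, a))) / β) ∂ν)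
termination_by T + 1 - t
decreasing_by omega

/-- Soft-optimal state-action value `Q*_{t,r}`. -/
def Qstar (β : ℝ) (r : ℕ → S → A → ℝ) (t : ℕ) (s : S) (a : A) : ℝ :=
  r t s a + ∫ s', Vstar T P ν β r (t + 1) s' ∂(P t (s, a))

/-- `ν`-density of the soft-optimal policy `π*_r`. -/
def piStar (β : ℝ) (r : ℕ → S → A → ℝ) (t : ℕ) (s : S) (a : A) : ℝ :=
  Real.exp ((Qstar T P ν β r t s a - Vstar T P ν β r t s) / β)

/-- Value function `V^π_{t,r}` of a policy given by densities `p` (with `β = 0` this is the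
unregularized value function `V^{π,0}`). -/
def Vpol (β : ℝ) (p r : ℕ → S → A → ℝ) (t : ℕ) (s : S) : ℝ :=
  if T < t then 0
  else ∫ a,
    (r t s a + (∫ s', Vpol β p r (t + 1) s' ∂(P t (s, a))) - β * Real.log (p t s a)) * p t s a ∂ν
termination_by T + 1 - t
decreasing_by omega

/-- `Q^π_{t,r}` for a policy given by densities `p`. -/
def Qpol (β : ℝ) (p r : ℕ → S → A → ℝ) (t : ℕ) (s : S) (a : A) : ℝ :=
  r t s a + ∫ s', Vpol T P ν β p r (t + 1) s' ∂(P t (s, a))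

/-- Regularized advantage `A^π_{t,r}(s,a) = Q^π - V^π - β log π_t(a|s)`. -/
def Apol (β : ℝ) (p r : ℕ → S → A → ℝ) (t : ℕ) (s : S) (a : A) : ℝ :=
  Qpol T P ν β p r t s a - Vpol T P ν β p r t s - β * Real.log (p t s a)

variable (P0 : Measure S)

/-- Optimal value `J*(r) = ∫ V*_{1,r} dP₀`. -/
def Jstar (β : ℝ) (r : ℕ → S → A → ℝ) : ℝ := ∫ s, Vstar T P ν β r 1 s ∂P0

/-- Expected (regularized) return `J(r,π)` of a density policy. -/
def Jpol (β : ℝ) (p r : ℕ → S → A → ℝ) : ℝ := ∫ s, Vpol T P ν β p r 1 s ∂P0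

/-- Iterated expectation, from time `t` in state `s`, of a trajectory functional `g` under a
(kernel) Markov policy `π`; coordinates of the trajectory outside `{1,…,T}` are irrelevant
junk values. -/
def polExp [Nonempty S] [Nonempty A] (pol : ℕ → Kernel S A) (g : (ℕ → S × A) → ℝ) (t : ℕ)
    (s : S) : ℝ :=
  if T < t then g (fun _ => (Classical.arbitrary S, Classical.arbitrary A))
  else ∫ a, ∫ s', polExp pol (fun τ => g (Function.update τ t (s, a))) (t + 1) s' ∂(P t (s, a))
    ∂(pol t s)
termination_by T + 1 - t
decreasing_by omega

/-- `μ` is the trajectory law `P^π` of the Markov policy `π` (with initial distribution `P₀`),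
characterized through integrals of all bounded measurable trajectory functionals. -/
def IsTrajLaw [Nonempty S] [Nonempty A] (pol : ℕ → Kernel S A) (μ : Measure (ℕ → S × A)) : Prop :=
  IsProbabilityMeasure μ ∧
    ∀ g : (ℕ → S × A) → ℝ, Measurable g → (∃ C, ∀ τ, |g τ| ≤ C) →
      ∫ τ, g τ ∂μ = ∫ s, polExp T P pol g 1 s ∂P0

/-- The kernel `s ↦ p t s ⬝ ν` of a policy given by densities. -/
def densKernel [IsFiniteMeasure ν] (p : ℕ → S → A → ℝ) (t : ℕ) : Kernel S A :=
  Kernel.withDensity (Kernel.const S ν) fun s a => ENNReal.ofReal (p t s a)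

open Classical in
/-- Kullback–Leibler divergence `∫ log (dμ/dμ') dμ` if `μ ≪ μ'` (`∞` otherwise). -/
def KL {X : Type*} [MeasurableSpace X] (μ μ' : Measure X) : ℝ≥0∞ :=
  if μ ≪ μ' ∧ Integrable (fun x => Real.log (μ.rnDeriv μ' x).toReal) μ then
    ENNReal.ofReal (∫ x, Real.log (μ.rnDeriv μ' x).toReal ∂μ)
  else ⊤

/-- Squared Hellinger distance, computed with the dominating measure `μ + μ'`. -/
def sqHellinger {X : Type*} [MeasurableSpace X] (μ μ' : Measure X) : ℝ :=
  ∫ x, (Real.sqrt ((μ.rnDeriv (μ + μ') x).toReal)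
      - Real.sqrt ((μ'.rnDeriv (μ + μ') x).toReal)) ^ 2 ∂(μ + μ')

/-- Second directional derivative. -/
def D2 {E : Type*} [NormedAddCommGroup E] [NormedSpace ℝ E] (F : E → ℝ) (θ ξ ζ : E) : ℝ :=
  fderiv ℝ (fun x => fderiv ℝ F x ζ) θ ξ

/-- Third directional derivative. -/
def D3 {E : Type*} [NormedAddCommGroup E] [NormedSpace ℝ E] (F : E → ℝ) (θ ξ ζ ω : E) : ℝ :=
  fderiv ℝ (fun x => D2 F x ζ ω) θ ξ

end IRL

open MeasureTheory ProbabilityTheory Real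
open scoped ENNReal

namespace IRL

section SoftOptimal

variable {S A : Type*} [MeasurableSpace S] [MeasurableSpace A]
  (T : ℕ) (P : ℕ → Kernel (S × A) S) (ν : Measure A) (β : ℝ) (r : ℕ → S → A → ℝ)

theorem Vstar_of_lt {t : ℕ} (ht : T < t) (s : S) : Vstar T P ν β r t s = 0 := by
  rw [Vstar, if_pos ht]

theorem Vstar_of_le {t : ℕ} (ht : t ≤ T) (s : S) :
    Vstar T P ν β r t s = β * Real.log (∫ a, Real.exp (Qstar T P ν β r t s a / β) ∂ν) := by
  rw [Vstar, if_neg (not_lt.mpr ht)]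
  rfl

theorem mul_log_piStar {β : ℝ} (hβ : β ≠ 0) (t : ℕ) (s : S) (a : A) :
    β * Real.log (piStar T P ν β r t s a) = Qstar T P ν β r t s a - Vstar T P ν β r t s := by
  rw [piStar, Real.log_exp, mul_div_cancel₀ _ hβ]

variable {T P ν r}

theorem measurable_Qstar [∀ t, IsSFiniteKernel (P t)]
    (hr : ∀ t, Measurable (fun q : S × A => r t q.1 q.2)) {t : ℕ}
    (hV : Measurable (Vstar T P ν β r (t + 1))) :
    Measurable (fun q : S × A => Qstar T P ν β r t q.1 q.2) :=
  (hr t).add (hV.stronglyMeasurable.comp_measurable measurable_snd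
    |>.integral_kernel_prod_right' (κ := P t)).measurable

theorem measurable_Vstar [∀ t, IsSFiniteKernel (P t)] [SFinite ν]
    (hr : ∀ t, Measurable (fun q : S × A => r t q.1 q.2)) (t : ℕ) :
    Measurable (Vstar T P ν β r t) := by
  induction hk : T + 1 - t generalizing t with
  | zero =>
    rw [funext (Vstar_of_lt T P ν β r (show T < t by omega))]
    exact measurable_const
  | succ k ih =>
    have hQ := measurable_Qstar β hr (ih (t + 1) (by omega))
    rw [funext (Vstar_of_le T P ν β r (show t ≤ T by omega))]
    exact measurable_const.mul
      ((hQ.div_const β).exp.stronglyMeasurable.integral_prod_right' (ν := ν)).measurable.log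

theorem Qstar_of_deterministic {f : ℕ → S → A → S} {t : ℕ}
    (hf : Measurable (fun q : S × A => f t q.1 q.2))
    (hP : P t = Kernel.deterministic (fun q : S × A => f t q.1 q.2) hf)
    (hV : Measurable (Vstar T P ν β r (t + 1))) (s : S) (a : A) :
    Qstar T P ν β r t s a = r t s a + Vstar T P ν β r (t + 1) (f t s a) := by
  rw [Qstar, hP, Kernel.integral_deterministic' hf hV.stronglyMeasurable]

theorem Jstar_dirac {sbar : S} (hV : Measurable (Vstar T P ν β r 1)) :
    Jstar T P ν (Measure.dirac sbar) β r = Vstar T P ν β r 1 sbar :=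
  integral_dirac' _ _ hV.stronglyMeasurable

theorem neg_mul_sum_log_piStar_of_deterministic [SFinite ν] {β : ℝ} (hβ : β ≠ 0)
    (hr : ∀ t, Measurable (fun q : S × A => r t q.1 q.2)) {sbar : S} {f : ℕ → S → A → S}
    (hf : ∀ t, Measurable (fun q : S × A => f t q.1 q.2))
    (hP : ∀ t, P t = Kernel.deterministic (fun q : S × A => f t q.1 q.2) (hf t))
    (τ : ℕ → S × A) (h1 : (τ 1).1 = sbar)
    (hstep : ∀ t, 1 ≤ t → t < T → (τ (t + 1)).1 = f t (τ t).1 (τ t).2) :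
    -β * ∑ t ∈ Finset.Icc 1 T, Real.log (piStar T P ν β r t (τ t).1 (τ t).2)
      = Jstar T P ν (Measure.dirac sbar) β r - ∑ t ∈ Finset.Icc 1 T, r t (τ t).1 (τ t).2 := by
  have : ∀ t, IsSFiniteKernel (P t) := fun t => hP t ▸ inferInstance
  have hV := measurable_Vstar (T := T) (P := P) (ν := ν) β hr
  set V : ℕ → ℝ := fun t => Vstar T P ν β r t (τ t).1 with hV_def
  have hnext : ∀ t ∈ Finset.Icc 1 T,
      Vstar T P ν β r (t + 1) (f t (τ t).1 (τ t).2) = V (t + 1) := by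
    intro t ht
    obtain ⟨ht1, htT⟩ := Finset.mem_Icc.mp ht
    rcases htT.lt_or_eq with htT | rfl
    · rw [← hstep t ht1 htT]
    · simp only [hV_def, Vstar_of_lt t P ν β r (Nat.lt_succ_self t)]
  have hterm : ∀ t ∈ Finset.Icc 1 T, -β * Real.log (piStar T P ν β r t (τ t).1 (τ t).2)
      = (V t - V (t + 1)) - r t (τ t).1 (τ t).2 := by
    intro t ht
    rw [neg_mul, mul_log_piStar T P ν r hβ, Qstar_of_deterministic β (hf t) (hP t) (hV _),
      hnext t ht]
    ring
  have htelescope : ∑ t ∈ Finset.Icc 1 T, (V t - V (t + 1)) = V 1 := by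
    have hVT : V (T + 1) = 0 := Vstar_of_lt T P ν β r (Nat.lt_succ_self T) _
    rw [← Finset.Ico_add_one_right_eq_Icc, ← neg_neg (∑ t ∈ _, _), ← Finset.sum_neg_distrib]
    simp only [neg_sub, Finset.sum_Ico_sub V (show 1 ≤ T + 1 by omega), hVT, zero_sub, neg_neg]
  rw [Finset.mul_sum, Finset.sum_congr rfl hterm, Finset.sum_sub_distrib, htelescope,
    Jstar_dirac β (hV 1), ← h1]

end SoftOptimal

end IRL

theorem mle_minmax_irl_empirical_equivalence_deterministic_general
    {S A : Type*} [MeasurableSpace S] [MeasurableSpace A]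
    (T : ℕ)
    (sbar : S) (f : ℕ → S → A → S) (hf : ∀ t, Measurable (fun q : S × A => f t q.1 q.2))
    (P0 : Measure S) (hP0 : P0 = Measure.dirac sbar)
    (P : ℕ → Kernel (S × A) S)
    (hP : ∀ t, P t = Kernel.deterministic (fun q : S × A => f t q.1 q.2) (hf t))
    (ν : Measure A) [IsFiniteMeasure ν]
    (β : ℝ) (hβ : 0 < β)
    (r : ℕ → S → A → ℝ) (hr : IRL.IsBddReward r) :
    -- trajectory-level identity on feasible trajectories
    (∀ τ : ℕ → S × A, (τ 1).1 = sbar →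
      (∀ t, 1 ≤ t → t < T → (τ (t + 1)).1 = f t (τ t).1 (τ t).2) →
      -β * ∑ t ∈ Finset.Icc 1 T, Real.log (IRL.piStar T P ν β r t (τ t).1 (τ t).2)
        = IRL.Jstar T P ν P0 β r - ∑ t ∈ Finset.Icc 1 T, r t (τ t).1 (τ t).2) ∧
    -- consequently the empirical risks agree on any dataset of feasible trajectories
    (∀ n : ℕ, 1 ≤ n → ∀ D : Fin n → (ℕ → S × A),
      (∀ i, (D i 1).1 = sbar ∧
        ∀ t, 1 ≤ t → t < T → (D i (t + 1)).1 = f t (D i t).1 (D i t).2) →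
      β * ((n : ℝ)⁻¹ * ∑ i : Fin n,
          (- ∑ t ∈ Finset.Icc 1 T, Real.log (IRL.piStar T P ν β r t (D i t).1 (D i t).2)))
        = IRL.Jstar T P ν P0 β r
          - (n : ℝ)⁻¹ * ∑ i : Fin n, ∑ t ∈ Finset.Icc 1 T, r t (D i t).1 (D i t).2) := by
  subst hP0
  have htraj := fun τ ↦ IRL.neg_mul_sum_log_piStar_of_deterministic (T := T) (ν := ν)
    (sbar := sbar) hβ.ne' (fun t ↦ (hr t).1) hf hP τ
  refine ⟨htraj, fun n hn D hD ↦ ?_⟩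
  have hrisk : ∀ i,
      β * -∑ t ∈ Finset.Icc 1 T, Real.log (IRL.piStar T P ν β r t (D i t).1 (D i t).2)
        = IRL.Jstar T P ν (Measure.dirac sbar) β r
          - ∑ t ∈ Finset.Icc 1 T, r t (D i t).1 (D i t).2 :=
    fun i ↦ by rw [mul_neg, ← neg_mul]; exact htraj (D i) (hD i).1 (hD i).2
  rw [mul_left_comm, Finset.mul_sum, Finset.sum_congr rfl fun i _ ↦ hrisk i,
    Finset.sum_sub_distrib, Finset.sum_const, Finset.card_univ, Fintype.card_fin, nsmul_eq_mul,
    mul_sub, inv_mul_cancel_left₀ (Nat.cast_ne_zero.mpr (Nat.one_le_iff_ne_zero.mp hn))]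

/-- **Empirical equivalence of MLE and Min-Max-IRL under deterministic dynamics**
(Theorem 1, part 1, empirical level). Under deterministic dynamics (`P₀ = δ_{s̄}`,
`P_t(·|s,a) = δ_{f_t(s,a)}`), for every bounded measurable reward `r` and every dynamically
feasible trajectory, the trajectory losses coincide:
`−β Σ_t log π*_{t,r}(a_t|s_t) = J*(r) − Σ_t r_t(s_t,a_t)`; consequently the empirical risks of
MLE and Min-Max-IRL agree (up to the factor `β`) on any finite dataset of feasible
trajectories. -/
theorem mle_minmax_irl_empirical_equivalence_deterministic
    {S A : Type*} [MeasurableSpace S] [MeasurableSpace A]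
    (T : ℕ) (hT : 1 ≤ T)
    (sbar : S) (f : ℕ → S → A → S) (hf : ∀ t, Measurable (fun q : S × A => f t q.1 q.2))
    (P0 : Measure S) (hP0 : P0 = Measure.dirac sbar)
    (P : ℕ → Kernel (S × A) S)
    (hP : ∀ t, P t = Kernel.deterministic (fun q : S × A => f t q.1 q.2) (hf t))
    (ν : Measure A) [IsFiniteMeasure ν] (hν : ν Set.univ ≠ 0)
    (β : ℝ) (hβ : 0 < β)
    (r : ℕ → S → A → ℝ) (hr : IRL.IsBddReward r) :
    -- trajectory-level identity on feasible trajectories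
    (∀ τ : ℕ → S × A, (τ 1).1 = sbar →
      (∀ t, 1 ≤ t → t < T → (τ (t + 1)).1 = f t (τ t).1 (τ t).2) →
      -β * ∑ t ∈ Finset.Icc 1 T, Real.log (IRL.piStar T P ν β r t (τ t).1 (τ t).2)
        = IRL.Jstar T P ν P0 β r - ∑ t ∈ Finset.Icc 1 T, r t (τ t).1 (τ t).2) ∧
    -- consequently the empirical risks agree on any dataset of feasible trajectories
    (∀ n : ℕ, 1 ≤ n → ∀ D : Fin n → (ℕ → S × A),
      (∀ i, (D i 1).1 = sbar ∧
        ∀ t, 1 ≤ t → t < T → (D i (t + 1)).1 = f t (D i t).1 (D i t).2) →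
      β * ((n : ℝ)⁻¹ * ∑ i : Fin n,
          (- ∑ t ∈ Finset.Icc 1 T, Real.log (IRL.piStar T P ν β r t (D i t).1 (D i t).2)))
        = IRL.Jstar T P ν P0 β r
          - (n : ℝ)⁻¹ * ∑ i : Fin n, ∑ t ∈ Finset.Icc 1 T, r t (D i t).1 (D i t).2) :=
  mle_minmax_irl_empirical_equivalence_deterministic_general T sbar f hf P0 hP0 P hP ν β hβ r hr
end
end

section
/- Orthogonal return decomposition (Lemma return_decomp): Let β ≥ 0, let r be a bounded measurable reward, and let π be a Markov policy (with kernels admitting ν-densities with bounded measurable log-densities when β > 0). For a trajectory τ = (s₁,a₁,…,s_T,a_T), define G^π_r(τ) := Σ_{t=1}^T ( r_t(s_t,a_t) − β log π_t(a_t|s_t) ), and for t = 0,…,T−1 define δ^π_{t,r} := V^π_{t+1,r}(s_{t+1}) − (P_t V^π_{t+1,r})(s_t,a_t), where for t = 0 one sets (P₀V^π_{1,r})(s₀,a₀) := ∫ V^π_{1,r} dP₀ (a constant). Then: (1) G^π_r(τ) − J(r,π) = Σ_{t=1}^T A^π_{t,r}(s_t,a_t) + Σ_{t=0}^{T−1}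 δ^π_{t,r} identically in τ; (2) for every s, ∫ A^π_{t,r}(s,a) π_t(da|s) = 0, and for every (s,a), ∫ ( V^π_{t+1,r}(s′) − (P_tV^π_{t+1,r})(s,a) ) P_t(ds′|s,a) = 0; (3) for any second policy π′, the 2T random variables A^π_{1,r}(s_1,a_1),…,A^π_{T,r}(s_T,a_T), δ^{π′}_{0,r},…,δ^{π′}_{T−1,r} are pairwise orthogonal in L²(P^π). -/
open MeasureTheory ProbabilityTheory Real
open scoped ENNReal RealInnerProductSpace

noncomputable section

/-!
The centred return telescopes: `A_t + δ_t` is the regularized reward of step `t` plus the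
increment of the predicted value `(P_t V_{t+1})(s_t, a_t)` (which is `J` at `t = 0` and vanishes
at `t = T`).

Orthogonality is the martingale-difference property of both kinds of terms: `A_t` has zero mean
over `a_t ∼ π_t(·|s_t)` and `δ_t` has zero mean over `s_{t+1} ∼ P_t(·|s_t, a_t)`, whatever the
past. In a product of two terms, integrating out the later random choice first kills the later
term while the earlier one is a constant. Under the trajectory law this integration is one step
of the recursion defining `polExp`, and the vanishing propagates back to time `1` because the
class of functionals with the zero-mean property at a fixed time is stable under fixing earlier
coordinates.
-/

lemma DependsOn.comp_update {ι : Type*} [DecidableEq ι] {α : ι → Type*} {β : Type*}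
    {g : (Π i, α i) → β} {s : Set ι} (hg : DependsOn g s) (i : ι) (x : α i) :
    DependsOn (fun τ => g (Function.update τ i x)) s := by
  intro τ τ' h
  refine hg fun j hj => ?_
  by_cases hji : j = i
  · subst hji; simp
  · simp [Function.update_of_ne hji, h j hj]

lemma DependsOn.mul {ι : Type*} {α : ι → Type*} {R : Type*} [Mul R]
    {f g : (Π i, α i) → R} {s : Set ι} (hf : DependsOn f s) (hg : DependsOn g s) :
    DependsOn (fun τ => f τ * g τ) s :=
  fun _ _ h => congrArg₂ (· * ·) (hf h) (hg h)

lemma dependsOn_comp_eval {ι α β : Type*} {i : ι} (f : α → β) {s : Set ι} (hi : i ∈ s) :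
    DependsOn (fun τ : ι → α => f (τ i)) s :=
  fun _ _ h => congrArg f (h i hi)

namespace IRL

open Function Set

section BddMeasurable

variable {X Y : Type*} [MeasurableSpace X] [MeasurableSpace Y]

def IsBddMeasurable (f : X → ℝ) : Prop :=
  Measurable f ∧ ∃ C, ∀ x, |f x| ≤ C

lemma isBddMeasurable_const (c : ℝ) : IsBddMeasurable fun _ : X => c :=
  ⟨measurable_const, |c|, fun _ => le_rfl⟩

namespace IsBddMeasurable

variable {f g : X → ℝ}

lemma comp (hf : IsBddMeasurable f) {h : Y → X} (hh : Measurable h) :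
    IsBddMeasurable fun y => f (h y) :=
  ⟨hf.1.comp hh, hf.2.imp fun _ hC y => hC (h y)⟩

lemma add (hf : IsBddMeasurable f) (hg : IsBddMeasurable g) : IsBddMeasurable (f + g) := by
  obtain ⟨hfm, C, hC⟩ := hf
  obtain ⟨hgm, D, hD⟩ := hg
  exact ⟨hfm.add hgm, C + D, fun x => (abs_add_le _ _).trans (add_le_add (hC x) (hD x))⟩

lemma neg (hf : IsBddMeasurable f) : IsBddMeasurable (-f) :=
  ⟨hf.1.neg, hf.2.imp fun _ hC x => by simpa using hC x⟩

lemma sub (hf : IsBddMeasurable f) (hg : IsBddMeasurable g) : IsBddMeasurable (f - g) := by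
  simpa only [sub_eq_add_neg] using hf.add hg.neg

lemma mul (hf : IsBddMeasurable f) (hg : IsBddMeasurable g) : IsBddMeasurable (f * g) := by
  obtain ⟨hfm, C, hC⟩ := hf
  obtain ⟨hgm, D, hD⟩ := hg
  refine ⟨hfm.mul hgm, |C| * |D|, fun x => ?_⟩
  rw [Pi.mul_apply, abs_mul]
  exact mul_le_mul ((hC x).trans (le_abs_self _)) ((hD x).trans (le_abs_self _))
    (abs_nonneg _) (abs_nonneg _)

lemma integrable (hf : IsBddMeasurable f) (μ : Measure X) [IsFiniteMeasure μ] :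
    Integrable f μ :=
  let ⟨C, hC⟩ := hf.2
  .of_bound hf.1.aestronglyMeasurable C (.of_forall fun x => hC x)

lemma integral_kernel {f : X × Y → ℝ} (hf : IsBddMeasurable f) (κ : Kernel X Y)
    [IsMarkovKernel κ] : IsBddMeasurable fun x => ∫ y, f (x, y) ∂κ x := by
  obtain ⟨hfm, C, hC⟩ := hf
  refine ⟨hfm.stronglyMeasurable.integral_kernel_prod_right'.measurable, C, fun x => ?_⟩
  simpa using norm_integral_le_of_norm_le_const (μ := κ x) (f := fun y => f (x, y))
    (.of_forall fun y => (Real.norm_eq_abs _).trans_le (hC (x, y)))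

end IsBddMeasurable

end BddMeasurable

section Trajectories

variable {S A : Type*} [MeasurableSpace S] [MeasurableSpace A]

/-- Zero conditional mean over the action at time `m` given the past and the state `s_m`;
`update τ m ((τ m).1, a)` resamples that action. -/
def HasZeroPolicyMean (pol : ℕ → Kernel S A) (m : ℕ) (g : (ℕ → S × A) → ℝ) : Prop :=
  ∀ τ, ∫ a, g (update τ m ((τ m).1, a)) ∂(pol m (τ m).1) = 0

/-- Zero conditional mean over `(s_{m+1}, a_{m+1})` given the past up to `(s_m, a_m)`. -/
def HasZeroTransitionMean (P : ℕ → Kernel (S × A) S) (pol : ℕ → Kernel S A) (m : ℕ)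
    (g : (ℕ → S × A) → ℝ) : Prop :=
  ∀ τ, ∫ s', ∫ a', g (update τ (m + 1) (s', a')) ∂(pol (m + 1) s') ∂(P m (τ m)) = 0

variable {P : ℕ → Kernel (S × A) S} {pol : ℕ → Kernel S A}

lemma HasZeroPolicyMean.comp_update {m : ℕ} {g : (ℕ → S × A) → ℝ}
    (hg : HasZeroPolicyMean pol m g) {i : ℕ} (hi : i ≠ m) (x : S × A) :
    HasZeroPolicyMean pol m fun τ => g (update τ i x) := by
  intro τ
  simpa [update_comm hi, update_of_ne hi.symm] using hg (update τ i x)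

lemma HasZeroTransitionMean.comp_update {m : ℕ} {g : (ℕ → S × A) → ℝ}
    (hg : HasZeroTransitionMean P pol m g) {i : ℕ} (hi : i < m) (x : S × A) :
    HasZeroTransitionMean P pol m fun τ => g (update τ i x) := by
  intro τ
  simpa [update_comm (show i ≠ m + 1 by omega), update_of_ne hi.ne'] using hg (update τ i x)

lemma hasZeroPolicyMean_mul {m : ℕ} {F : (ℕ → S × A) → ℝ}
    (hF : ∀ τ a, F (update τ m ((τ m).1, a)) = F τ) {φ : S × A → ℝ}
    (hφ : ∀ s, ∫ a, φ (s, a) ∂(pol m s) = 0) :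
    HasZeroPolicyMean pol m fun τ => F τ * φ (τ m) := by
  intro τ
  simp [hF, integral_const_mul, hφ]

/-- The dynamics residual `δ_t`; at `t = 0` the constant `c` stands for `∫ V₁ dP₀`. -/
def residual (P : ℕ → Kernel (S × A) S) (V : ℕ → S → ℝ) (c : ℝ) (t : ℕ) (τ : ℕ → S × A) : ℝ :=
  if t = 0 then V 1 (τ 1).1 - c else V (t + 1) (τ (t + 1)).1 - ∫ s', V (t + 1) s' ∂(P t (τ t))

variable {V : ℕ → S → ℝ} {c : ℝ}

lemma residual_of_ne_zero {t : ℕ} (ht : t ≠ 0) (τ : ℕ → S × A) :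
    residual P V c t τ = V (t + 1) (τ (t + 1)).1 - ∫ s', V (t + 1) s' ∂(P t (τ t)) :=
  if_neg ht

lemma isBddMeasurable_residual [∀ t, IsMarkovKernel (P t)] {t : ℕ}
    (hV : IsBddMeasurable (V (t + 1))) : IsBddMeasurable (residual P V c t) := by
  have hnext : IsBddMeasurable fun τ : ℕ → S × A => V (t + 1) (τ (t + 1)).1 :=
    hV.comp (measurable_fst.comp (measurable_pi_apply _))
  unfold residual
  split_ifs with ht
  · subst ht
    exact hnext.sub (isBddMeasurable_const c)
  · exact hnext.sub (((hV.comp measurable_snd).integral_kernel (P t)).comp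
      (measurable_pi_apply t))

lemma dependsOn_residual (t : ℕ) : DependsOn (residual P V c t) (Iic (t + 1)) := by
  intro τ τ' h
  have h1 := h (t + 1) self_mem_Iic
  have h0 := h t (by simp)
  unfold residual
  split_ifs with ht
  · subst ht; rw [h1]
  · rw [h0, h1]

lemma residual_update_of_lt {t m : ℕ} (h : t < m) (τ : ℕ → S × A) (a : A) :
    residual P V c t (update τ m ((τ m).1, a)) = residual P V c t τ := by
  rcases (Nat.succ_le_of_lt h).eq_or_lt with rfl | h'
  · unfold residual
    split_ifs with ht
    · subst ht; simp
    · simp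
  · exact dependsOn_residual t fun i hi => update_of_ne (by simp at hi; omega) _ _

lemma hasZeroTransitionMean_mul_residual [∀ t, IsMarkovKernel (P t)]
    [∀ t, IsMarkovKernel (pol t)] {m : ℕ} (hm : m ≠ 0) {F : (ℕ → S × A) → ℝ}
    (hF : DependsOn F (Iic m)) :
    HasZeroTransitionMean P pol m fun τ => F τ * residual P V c m τ := by
  intro τ
  have hFτ (x : S × A) : F (update τ (m + 1) x) = F τ :=
    hF fun i hi => update_of_ne (by simp at hi; omega) _ _
  have hcentered := integral_sub_average (P m (τ m)) (V (m + 1))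
  rw [average_eq_integral] at hcentered
  simp [residual_of_ne_zero hm, hFτ, integral_const_mul, hcentered]

lemma sum_Icc_one_eq_sum_range (g : ℕ → ℝ) (n : ℕ) :
    ∑ t ∈ Finset.Icc 1 n, g t = ∑ i ∈ Finset.range n, g (i + 1) := by
  rw [Finset.range_eq_Ico, Finset.sum_Ico_add']
  rfl

theorem sum_sub_eq_sum_add_sum_residual {T : ℕ} (hT : 1 ≤ T) (f adv : ℕ → S × A → ℝ)
    (hV : ∀ s, V (T + 1) s = 0)
    (hadv : ∀ t q, adv t q = f t q + ∫ s', V (t + 1) s' ∂(P t q) - V t q.1) (τ : ℕ → S × A) :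
    ∑ t ∈ Finset.Icc 1 T, f t (τ t) - c
      = ∑ t ∈ Finset.Icc 1 T, adv t (τ t) + ∑ t ∈ Finset.range T, residual P V c t τ := by
  set m : ℕ → ℝ := fun t => if t = 0 then c else ∫ s', V (t + 1) s' ∂(P t (τ t))
  have hstep (i : ℕ) : adv (i + 1) (τ (i + 1)) + residual P V c i τ
      = f (i + 1) (τ (i + 1)) + (m (i + 1) - m i) := by
    rw [hadv]
    unfold residual
    split_ifs with hi <;> simp [m, hi] <;> ring
  have hend : m T = 0 := by simp [m, hV, show T ≠ 0 by omega]
  calc ∑ t ∈ Finset.Icc 1 T, f t (τ t) - c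
      = ∑ i ∈ Finset.range T, f (i + 1) (τ (i + 1)) + (m T - m 0) := by
        simp [sum_Icc_one_eq_sum_range, hend, m, sub_eq_add_neg]
    _ = ∑ i ∈ Finset.range T, (adv (i + 1) (τ (i + 1)) + residual P V c i τ) := by
        simp_rw [hstep, Finset.sum_add_distrib, Finset.sum_range_sub]
    _ = _ := by rw [Finset.sum_add_distrib, sum_Icc_one_eq_sum_range]

end Trajectories

section PolExp

variable {S A : Type*} [MeasurableSpace S] [MeasurableSpace A] [Nonempty S] [Nonempty A]
  {T : ℕ} {P : ℕ → Kernel (S × A) S} {pol : ℕ → Kernel S A}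

variable (S A) in
/-- `polExp` evaluates its functional on this trajectory, with coordinates `t, …, T`
overwritten. -/
def defaultTraj : ℕ → S × A := fun _ => (Classical.arbitrary S, Classical.arbitrary A)

theorem polExp_eq_zero_of_update_closed {m : ℕ} (hm : m ≤ T)
    {Φ : ((ℕ → S × A) → ℝ) → Prop}
    (hΦ : ∀ g, Φ g → ∀ i < m, ∀ x, Φ fun τ => g (update τ i x))
    (hzero : ∀ g, Φ g → ∀ s, polExp T P pol g m s = 0)
    {g : (ℕ → S × A) → ℝ} (hg : Φ g) {u : ℕ} (hu : u ≤ m) (s : S) :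
    polExp T P pol g u s = 0 := by
  rcases hu.eq_or_lt with rfl | hu
  · exact hzero g hg s
  rw [polExp, if_neg (by omega)]
  have hstep (a : A) (s' : S) :
      polExp T P pol (fun τ => g (update τ u (s, a))) (u + 1) s' = 0 :=
    polExp_eq_zero_of_update_closed hm hΦ hzero (hΦ g hg u hu (s, a)) hu s'
  simp [hstep]
termination_by m - u
decreasing_by omega

theorem IsTrajLaw.integral_eq_zero {P0 : Measure S} {μ : Measure (ℕ → S × A)}
    (hμ : IsTrajLaw T P P0 pol μ) {g : (ℕ → S × A) → ℝ} (hg : IsBddMeasurable g)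
    (hzero : ∀ s, polExp T P pol g 1 s = 0) : ∫ τ, g τ ∂μ = 0 := by
  simp [hμ.2 g hg.1 hg.2, hzero]

variable [∀ t, IsMarkovKernel (P t)] [∀ t, IsMarkovKernel (pol t)]

theorem polExp_of_dependsOn_Iio {g : (ℕ → S × A) → ℝ} {u : ℕ} (hg : DependsOn g (Iio u))
    (s : S) : polExp T P pol g u s = g (defaultTraj S A) := by
  rw [polExp]
  split_ifs with hTu
  · rfl
  have hstep (a : A) (s' : S) :
      polExp T P pol (fun τ => g (update τ u (s, a))) (u + 1) s' = g (defaultTraj S A) := by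
    rw [polExp_of_dependsOn_Iio ((hg.comp_update u (s, a)).mono (Iio_subset_Iio u.le_succ))]
    exact hg fun i hi => update_of_ne (ne_of_lt hi) _ _
  simp [hstep]
termination_by T + 1 - u
decreasing_by omega

theorem polExp_of_dependsOn_Iic {g : (ℕ → S × A) → ℝ} {m : ℕ} (hm : m ≤ T)
    (hg : DependsOn g (Iic m)) (s : S) :
    polExp T P pol g m s = ∫ a, g (update (defaultTraj S A) m (s, a)) ∂(pol m s) := by
  rw [polExp, if_neg hm.not_gt]
  have hdep (a : A) : DependsOn (fun τ => g (update τ m (s, a))) (Iio (m + 1)) := by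
    simpa [Set.Iio_add_one_eq_Iic] using hg.comp_update m (s, a)
  simp [polExp_of_dependsOn_Iio (hdep _)]

theorem polExp_eq_zero_of_hasZeroPolicyMean {m : ℕ} (hm : m ≤ T) {g : (ℕ → S × A) → ℝ}
    (hdep : DependsOn g (Iic m)) (hg : HasZeroPolicyMean pol m g) {u : ℕ} (hu : u ≤ m)
    (s : S) : polExp T P pol g u s = 0 := by
  refine polExp_eq_zero_of_update_closed hm (Φ := fun g => DependsOn g (Iic m) ∧
    HasZeroPolicyMean pol m g) (fun g hg i hi x => ⟨hg.1.comp_update i x,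
      hg.2.comp_update hi.ne x⟩) (fun g hg s => ?_) ⟨hdep, hg⟩ hu s
  rw [polExp_of_dependsOn_Iic hm hg.1]
  simpa using hg.2 (update (defaultTraj S A) m (s, Classical.arbitrary A))

theorem polExp_eq_zero_of_hasZeroTransitionMean {m : ℕ} (hm : m < T)
    {g : (ℕ → S × A) → ℝ} (hdep : DependsOn g (Iic (m + 1)))
    (hg : HasZeroTransitionMean P pol m g) {u : ℕ} (hu : u ≤ m) (s : S) :
    polExp T P pol g u s = 0 := by
  refine polExp_eq_zero_of_update_closed hm.le (Φ := fun g => DependsOn g (Iic (m + 1)) ∧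
    HasZeroTransitionMean P pol m g) (fun g hg i hi x => ⟨hg.1.comp_update i x,
      hg.2.comp_update hi x⟩) (fun g hg s => ?_) ⟨hdep, hg⟩ hu s
  rw [polExp, if_neg (by omega)]
  have hinner (a : A) (s' : S) :
      polExp T P pol (fun τ => g (update τ m (s, a))) (m + 1) s'
        = ∫ a', g (update (update (defaultTraj S A) m (s, a)) (m + 1) (s', a'))
            ∂(pol (m + 1) s') := by
    rw [polExp_of_dependsOn_Iic hm (hg.1.comp_update m (s, a))]
    simp only [update_comm (show m + 1 ≠ m by omega)]
  have hzero (a : A) := hg.2 (update (defaultTraj S A) m (s, a))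
  simp only [update_self] at hzero
  simp [hinner, hzero]

variable {P0 : Measure S} {μ : Measure (ℕ → S × A)}

theorem IsTrajLaw.integral_mul_eq_zero_of_policyMean (hμ : IsTrajLaw T P P0 pol μ) {m : ℕ}
    (hm : 1 ≤ m) (hmT : m ≤ T) {F : (ℕ → S × A) → ℝ} (hF : IsBddMeasurable F)
    (hFdep : DependsOn F (Iic m)) (hFa : ∀ τ a, F (update τ m ((τ m).1, a)) = F τ)
    {φ : S × A → ℝ} (hφ : IsBddMeasurable φ) (hφ0 : ∀ s, ∫ a, φ (s, a) ∂(pol m s) = 0) :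
    ∫ τ, F τ * φ (τ m) ∂μ = 0 :=
  hμ.integral_eq_zero (hF.mul (hφ.comp (measurable_pi_apply m))) fun s =>
    polExp_eq_zero_of_hasZeroPolicyMean hmT (hFdep.mul (dependsOn_comp_eval φ self_mem_Iic))
      (hasZeroPolicyMean_mul hFa hφ0) hm s

theorem IsTrajLaw.integral_mul_residual_eq_zero_of_dependsOn (hμ : IsTrajLaw T P P0 pol μ)
    {V : ℕ → S → ℝ} {c : ℝ} {m : ℕ} (hm : 1 ≤ m) (hmT : m < T) {F : (ℕ → S × A) → ℝ}
    (hF : IsBddMeasurable F) (hFdep : DependsOn F (Iic m)) (hV : IsBddMeasurable (V (m + 1))) :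
    ∫ τ, F τ * residual P V c m τ ∂μ = 0 :=
  hμ.integral_eq_zero (hF.mul (isBddMeasurable_residual hV)) fun s =>
    polExp_eq_zero_of_hasZeroTransitionMean hmT
      ((hFdep.mono (Iic_subset_Iic.2 m.le_succ)).mul (dependsOn_residual m))
      (hasZeroTransitionMean_mul_residual (by omega) hFdep) hm s

variable {φ : ℕ → S × A → ℝ} {V : ℕ → S → ℝ} {c : ℝ}

theorem IsTrajLaw.integral_eval_mul_eval_eq_zero (hμ : IsTrajLaw T P P0 pol μ)
    (hφ : ∀ t, IsBddMeasurable (φ t))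
    (hφ0 : ∀ t, 1 ≤ t → t ≤ T → ∀ s, ∫ a, φ t (s, a) ∂(pol t s) = 0)
    {t t' : ℕ} (ht : t ∈ Finset.Icc 1 T) (ht' : t' ∈ Finset.Icc 1 T) (hne : t ≠ t') :
    ∫ τ, φ t (τ t) * φ t' (τ t') ∂μ = 0 := by
  have hlt {t t' : ℕ} (h1 : 1 ≤ t) (hlt : t < t') (hT : t' ≤ T) :
      ∫ τ, φ t (τ t) * φ t' (τ t') ∂μ = 0 :=
    hμ.integral_mul_eq_zero_of_policyMean (by omega) hT ((hφ t).comp (measurable_pi_apply t))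
      (dependsOn_comp_eval _ (mem_Iic.2 hlt.le)) (fun τ a => by rw [update_of_ne hlt.ne])
      (hφ t') (hφ0 t' (by omega) hT)
  rw [Finset.mem_Icc] at ht ht'
  rcases hne.lt_or_gt with h | h
  · exact hlt ht.1 h ht'.2
  · simpa only [mul_comm] using hlt ht'.1 h ht.2

theorem IsTrajLaw.integral_eval_mul_residual_eq_zero (hμ : IsTrajLaw T P P0 pol μ)
    (hφ : ∀ t, IsBddMeasurable (φ t))
    (hφ0 : ∀ t, 1 ≤ t → t ≤ T → ∀ s, ∫ a, φ t (s, a) ∂(pol t s) = 0)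
    (hV : ∀ t, IsBddMeasurable (V t))
    {t t' : ℕ} (ht : t ∈ Finset.Icc 1 T) (ht' : t' ∈ Finset.range T) :
    ∫ τ, φ t (τ t) * residual P V c t' τ ∂μ = 0 := by
  rw [Finset.mem_Icc] at ht
  rw [Finset.mem_range] at ht'
  by_cases h : t' < t
  · simpa only [mul_comm] using hμ.integral_mul_eq_zero_of_policyMean ht.1 ht.2
      (isBddMeasurable_residual (hV _)) ((dependsOn_residual t').mono (Iic_subset_Iic.2 h))
      (residual_update_of_lt h) (hφ t) (hφ0 t ht.1 ht.2)
  · exact hμ.integral_mul_residual_eq_zero_of_dependsOn (by omega) ht'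
      ((hφ t).comp (measurable_pi_apply t)) (dependsOn_comp_eval _ (mem_Iic.2 (by omega)))
      (hV _)

theorem IsTrajLaw.integral_residual_mul_residual_eq_zero (hμ : IsTrajLaw T P P0 pol μ)
    (hV : ∀ t, IsBddMeasurable (V t))
    {t t' : ℕ} (ht : t ∈ Finset.range T) (ht' : t' ∈ Finset.range T) (hne : t ≠ t') :
    ∫ τ, residual P V c t τ * residual P V c t' τ ∂μ = 0 := by
  have hlt {t t' : ℕ} (hlt : t < t') (hT : t' < T) :
      ∫ τ, residual P V c t τ * residual P V c t' τ ∂μ = 0 :=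
    hμ.integral_mul_residual_eq_zero_of_dependsOn (by omega) hT
      (isBddMeasurable_residual (hV _)) ((dependsOn_residual t).mono (Iic_subset_Iic.2 hlt))
      (hV _)
  rw [Finset.mem_range] at ht ht'
  rcases hne.lt_or_gt with h | h
  · exact hlt h ht'
  · simpa only [mul_comm] using hlt h ht

end PolExp

section ValueFunctions

variable {S A : Type*} [MeasurableSpace S] [MeasurableSpace A] {T : ℕ}
  {P : ℕ → Kernel (S × A) S} {ν : Measure A} {β : ℝ} {r p : ℕ → S → A → ℝ}

lemma IsPolicyDensity.integrable (hp : IsPolicyDensity ν p) (t : ℕ) (s : S) :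
    Integrable (p t s) ν := by
  by_contra h
  simpa [integral_undef h] using hp.2.2 t s

lemma IsBddReward.isBddMeasurable (hr : IsBddReward r) (t : ℕ) :
    IsBddMeasurable fun q : S × A => r t q.1 q.2 :=
  ⟨(hr t).1, (hr t).2.imp fun _ hC q => hC q.1 q.2⟩

lemma isBddMeasurable_logDensity (hβ : 0 ≤ β) (hp : IsPolicyDensity ν p)
    (hlog : 0 < β → HasBddLogDensity p) (t : ℕ) :
    IsBddMeasurable fun q : S × A => β * Real.log (p t q.1 q.2) := by
  refine ⟨measurable_const.mul (hp.1 t).log, ?_⟩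
  rcases hβ.eq_or_lt with rfl | hβ
  · exact ⟨0, by simp⟩
  obtain ⟨C, hC⟩ := (hlog hβ t).2
  exact ⟨β * C, fun q => by
    rw [abs_mul, abs_of_pos hβ]
    exact mul_le_mul_of_nonneg_left (hC q.1 q.2) hβ.le⟩

lemma Vpol_of_lt {t : ℕ} (ht : T < t) : Vpol T P ν β p r t = 0 := by
  funext s
  rw [Vpol, if_pos ht]
  rfl

lemma isBddMeasurable_Qpol [∀ t, IsMarkovKernel (P t)] (hr : IsBddReward r) {t : ℕ}
    (hV : IsBddMeasurable (Vpol T P ν β p r (t + 1))) :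
    IsBddMeasurable fun q : S × A => Qpol T P ν β p r t q.1 q.2 :=
  (hr.isBddMeasurable t).add ((hV.comp measurable_snd).integral_kernel (P t))

variable [IsFiniteMeasure ν]

lemma densKernel_apply (hp : IsPolicyDensity ν p) (t : ℕ) (s : S) :
    densKernel ν p t s = ν.withDensity fun a => ENNReal.ofReal (p t s a) := by
  rw [densKernel, Kernel.withDensity_apply, Kernel.const_apply]
  exact ENNReal.measurable_ofReal.comp (hp.1 t)

lemma isMarkovKernel_densKernel (hp : IsPolicyDensity ν p) (t : ℕ) :
    IsMarkovKernel (densKernel ν p t) := by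
  refine ⟨fun s => ⟨?_⟩⟩
  rw [densKernel_apply hp, withDensity_apply _ MeasurableSet.univ, Measure.restrict_univ,
    ← ofReal_integral_eq_lintegral_ofReal (hp.integrable t s) (.of_forall (hp.2.1 t s)),
    hp.2.2 t s, ENNReal.ofReal_one]

lemma integral_densKernel (hp : IsPolicyDensity ν p) (t : ℕ) (s : S) (f : A → ℝ) :
    ∫ a, f a ∂(densKernel ν p t s) = ∫ a, p t s a * f a ∂ν := by
  rw [densKernel_apply hp, integral_withDensity_eq_integral_toReal_smul
    (f := fun a => ENNReal.ofReal (p t s a))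
    (ENNReal.measurable_ofReal.comp ((hp.1 t).comp measurable_prodMk_left))
    (.of_forall fun _ => ENNReal.ofReal_lt_top)]
  simp [ENNReal.toReal_ofReal (hp.2.1 t s _)]

lemma Vpol_eq_integral_densKernel (hp : IsPolicyDensity ν p) {t : ℕ} (ht : t ≤ T) (s : S) :
    Vpol T P ν β p r t s
      = ∫ a, (Qpol T P ν β p r t s a - β * Real.log (p t s a)) ∂(densKernel ν p t s) := by
  rw [Vpol, if_neg ht.not_gt, integral_densKernel hp]
  simp only [Qpol, mul_comm]

variable [∀ t, IsMarkovKernel (P t)]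

theorem isBddMeasurable_Vpol (hr : IsBddReward r) (hp : IsPolicyDensity ν p)
    (hL : ∀ t, IsBddMeasurable fun q : S × A => β * Real.log (p t q.1 q.2)) (t : ℕ) :
    IsBddMeasurable (Vpol T P ν β p r t) := by
  by_cases ht : T < t
  · rw [Vpol_of_lt ht]
    exact isBddMeasurable_const 0
  have := isMarkovKernel_densKernel hp t
  have hQ := isBddMeasurable_Qpol hr (isBddMeasurable_Vpol hr hp hL (t + 1))
  rw [funext (Vpol_eq_integral_densKernel hp (not_lt.1 ht))]
  exact (hQ.sub (hL t)).integral_kernel (densKernel ν p t)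
termination_by T + 1 - t

theorem isBddMeasurable_Apol (hr : IsBddReward r) (hp : IsPolicyDensity ν p)
    (hL : ∀ t, IsBddMeasurable fun q : S × A => β * Real.log (p t q.1 q.2)) (t : ℕ) :
    IsBddMeasurable fun q : S × A => Apol T P ν β p r t q.1 q.2 :=
  ((isBddMeasurable_Qpol hr (isBddMeasurable_Vpol hr hp hL (t + 1))).sub
    ((isBddMeasurable_Vpol hr hp hL t).comp measurable_fst)).sub (hL t)

theorem integral_Apol_densKernel (hr : IsBddReward r) (hp : IsPolicyDensity ν p)
    (hL : ∀ t, IsBddMeasurable fun q : S × A => β * Real.log (p t q.1 q.2)) {t : ℕ}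
    (ht : t ≤ T) (s : S) :
    ∫ a, Apol T P ν β p r t s a ∂(densKernel ν p t s) = 0 := by
  have := isMarkovKernel_densKernel hp t
  have hint : Integrable (fun a => Qpol T P ν β p r t s a - β * Real.log (p t s a))
      (densKernel ν p t s) :=
    (((isBddMeasurable_Qpol hr (isBddMeasurable_Vpol hr hp hL (t + 1))).sub (hL t)).comp
      measurable_prodMk_left).integrable _
  simp only [Apol, sub_right_comm _ (Vpol T P ν β p r t s)]
  rw [integral_sub hint (integrable_const _), ← Vpol_eq_integral_densKernel hp ht]
  simp

end ValueFunctions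

end IRL

open MeasureTheory ProbabilityTheory Real
open scoped ENNReal

theorem orthogonal_return_decomposition_general
    {S A : Type*} [MeasurableSpace S] [MeasurableSpace A] [Nonempty S] [Nonempty A]
    (T : ℕ) (hT : 1 ≤ T)
    (P0 : Measure S)
    (P : ℕ → Kernel (S × A) S) [∀ t, IsMarkovKernel (P t)]
    (ν : Measure A) [IsFiniteMeasure ν]
    (β : ℝ) (hβ : 0 ≤ β)
    (r : ℕ → S → A → ℝ) (hr : IRL.IsBddReward r)
    (p : ℕ → S → A → ℝ) (hp : IRL.IsPolicyDensity ν p)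
    (hlog : 0 < β → IRL.HasBddLogDensity p)
    (p' : ℕ → S → A → ℝ) (hp' : IRL.IsPolicyDensity ν p')
    (hlog' : 0 < β → IRL.HasBddLogDensity p')
    (Ppi : Measure (ℕ → S × A)) (hPpi : IRL.IsTrajLaw T P P0 (IRL.densKernel ν p) Ppi)
    -- the regularized return `G^π_r`
    (G : (ℕ → S × A) → ℝ)
    (hG : G = fun τ => ∑ t ∈ Finset.Icc 1 T,
      (r t (τ t).1 (τ t).2 - β * Real.log (p t (τ t).1 (τ t).2)))
    -- the advantage terms `A^π_{t,r}(s_t,a_t)`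
    (X : ℕ → (ℕ → S × A) → ℝ)
    (hX : X = fun t τ => IRL.Apol T P ν β p r t (τ t).1 (τ t).2)
    -- the dynamics residuals `δ^{π′}_{t,r}` (index `0` uses the initial distribution)
    (Y : ℕ → (ℕ → S × A) → ℝ)
    (hY : Y = fun t τ =>
      if t = 0 then IRL.Vpol T P ν β p' r 1 (τ 1).1 - IRL.Jpol T P ν P0 β p' r
      else IRL.Vpol T P ν β p' r (t + 1) (τ (t + 1)).1
        - ∫ s', IRL.Vpol T P ν β p' r (t + 1) s' ∂(P t ((τ t).1, (τ t).2)))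
    -- residuals for `π` itself (used in the pointwise decomposition)
    (Yp : ℕ → (ℕ → S × A) → ℝ)
    (hYp : Yp = fun t τ =>
      if t = 0 then IRL.Vpol T P ν β p r 1 (τ 1).1 - IRL.Jpol T P ν P0 β p r
      else IRL.Vpol T P ν β p r (t + 1) (τ (t + 1)).1
        - ∫ s', IRL.Vpol T P ν β p r (t + 1) s' ∂(P t ((τ t).1, (τ t).2))) :
    -- (1) pointwise decomposition of the centered return
    (∀ τ : ℕ → S × A,
      G τ - IRL.Jpol T P ν P0 β p r
        = (∑ t ∈ Finset.Icc 1 T, X t τ) + ∑ t ∈ Finset.range T, Yp t τ) ∧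
    -- (2) zero conditional means
    (∀ t, 1 ≤ t → t ≤ T → ∀ s : S, ∫ a, IRL.Apol T P ν β p r t s a * p t s a ∂ν = 0) ∧
    (∀ t, 1 ≤ t → t ≤ T - 1 → ∀ s a,
      ∫ s', (IRL.Vpol T P ν β p' r (t + 1) s'
          - ∫ s'', IRL.Vpol T P ν β p' r (t + 1) s'' ∂(P t (s, a))) ∂(P t (s, a)) = 0) ∧
    -- (3) pairwise orthogonality in `L²(P^π)`
    (∀ t ∈ Finset.Icc 1 T, ∀ t' ∈ Finset.Icc 1 T, t ≠ t' →
      ∫ τ, X t τ * X t' τ ∂Ppi = 0) ∧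
    (∀ t ∈ Finset.Icc 1 T, ∀ t' ∈ Finset.range T, ∫ τ, X t τ * Y t' τ ∂Ppi = 0) ∧
    (∀ t ∈ Finset.range T, ∀ t' ∈ Finset.range T, t ≠ t' →
      ∫ τ, Y t τ * Y t' τ ∂Ppi = 0) := by
  subst hG hX hY hYp
  have hL := IRL.isBddMeasurable_logDensity hβ hp hlog
  have hV' := IRL.isBddMeasurable_Vpol (T := T) (P := P) hr hp'
    (IRL.isBddMeasurable_logDensity hβ hp' hlog')
  have hA := IRL.isBddMeasurable_Apol (T := T) (P := P) hr hp hL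
  have : ∀ t, IsMarkovKernel (IRL.densKernel ν p t) := IRL.isMarkovKernel_densKernel hp
  have hA0 : ∀ t, 1 ≤ t → t ≤ T → ∀ s,
      ∫ a, IRL.Apol T P ν β p r t s a ∂(IRL.densKernel ν p t s) = 0 :=
    fun t _ ht s => IRL.integral_Apol_densKernel hr hp hL ht s
  refine ⟨fun τ => ?_, fun t ht ht' s => ?_, fun t _ _ s a => ?_,
    fun t ht t' ht' hne => hPpi.integral_eval_mul_eval_eq_zero hA hA0 ht ht' hne,
    fun t ht t' ht' => hPpi.integral_eval_mul_residual_eq_zero hA hA0 hV' ht ht',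
    fun t ht t' ht' hne => hPpi.integral_residual_mul_residual_eq_zero hV' ht ht' hne⟩
  · exact IRL.sum_sub_eq_sum_add_sum_residual hT
      (fun t q => r t q.1 q.2 - β * Real.log (p t q.1 q.2))
      (fun t q => IRL.Apol T P ν β p r t q.1 q.2) (congrFun (IRL.Vpol_of_lt T.lt_succ_self))
      (fun t q => by simp only [IRL.Apol, IRL.Qpol]; ring) τ
  · simpa [IRL.integral_densKernel hp, mul_comm] using hA0 t ht ht' s
  · simpa [average_eq_integral] using integral_sub_average (P t (s, a)) _

/-- **Orthogonal return decomposition** (Lemma `return_decomp`). For `β ≥ 0`, a bounded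
measurable reward `r` and Markov policies `π, π′` with `ν`-densities (with bounded
log-densities when `β > 0`): (1) the centered regularized return decomposes pointwise into
advantage terms and dynamics residuals; (2) the advantages have zero conditional mean under
`π` and the residuals have zero conditional mean under the dynamics; (3) the `2T` random
variables `A^π_{1,r},…,A^π_{T,r}, δ^{π′}_{0,r},…,δ^{π′}_{T−1,r}` are pairwise orthogonal in
`L²(P^π)`. -/
theorem orthogonal_return_decomposition
    {S A : Type*} [MeasurableSpace S] [MeasurableSpace A] [Nonempty S] [Nonempty A]
    (T : ℕ) (hT : 1 ≤ T)
    (P0 : Measure S) [IsProbabilityMeasure P0]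
    (P : ℕ → Kernel (S × A) S) [∀ t, IsMarkovKernel (P t)]
    (ν : Measure A) [IsFiniteMeasure ν] (hν : ν Set.univ ≠ 0)
    (β : ℝ) (hβ : 0 ≤ β)
    (r : ℕ → S → A → ℝ) (hr : IRL.IsBddReward r)
    (p : ℕ → S → A → ℝ) (hp : IRL.IsPolicyDensity ν p)
    (hlog : 0 < β → IRL.HasBddLogDensity p)
    (p' : ℕ → S → A → ℝ) (hp' : IRL.IsPolicyDensity ν p')
    (hlog' : 0 < β → IRL.HasBddLogDensity p')
    (Ppi : Measure (ℕ → S × A)) (hPpi : IRL.IsTrajLaw T P P0 (IRL.densKernel ν p) Ppi)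
    -- the regularized return `G^π_r`
    (G : (ℕ → S × A) → ℝ)
    (hG : G = fun τ => ∑ t ∈ Finset.Icc 1 T,
      (r t (τ t).1 (τ t).2 - β * Real.log (p t (τ t).1 (τ t).2)))
    -- the advantage terms `A^π_{t,r}(s_t,a_t)`
    (X : ℕ → (ℕ → S × A) → ℝ)
    (hX : X = fun t τ => IRL.Apol T P ν β p r t (τ t).1 (τ t).2)
    -- the dynamics residuals `δ^{π′}_{t,r}` (index `0` uses the initial distribution)
    (Y : ℕ → (ℕ → S × A) → ℝ)
    (hY : Y = fun t τ =>
      if t = 0 then IRL.Vpol T P ν β p' r 1 (τ 1).1 - IRL.Jpol T P ν P0 β p' r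
      else IRL.Vpol T P ν β p' r (t + 1) (τ (t + 1)).1
        - ∫ s', IRL.Vpol T P ν β p' r (t + 1) s' ∂(P t ((τ t).1, (τ t).2)))
    -- residuals for `π` itself (used in the pointwise decomposition)
    (Yp : ℕ → (ℕ → S × A) → ℝ)
    (hYp : Yp = fun t τ =>
      if t = 0 then IRL.Vpol T P ν β p r 1 (τ 1).1 - IRL.Jpol T P ν P0 β p r
      else IRL.Vpol T P ν β p r (t + 1) (τ (t + 1)).1
        - ∫ s', IRL.Vpol T P ν β p r (t + 1) s' ∂(P t ((τ t).1, (τ t).2))) :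
    -- (1) pointwise decomposition of the centered return
    (∀ τ : ℕ → S × A,
      G τ - IRL.Jpol T P ν P0 β p r
        = (∑ t ∈ Finset.Icc 1 T, X t τ) + ∑ t ∈ Finset.range T, Yp t τ) ∧
    -- (2) zero conditional means
    (∀ t, 1 ≤ t → t ≤ T → ∀ s : S, ∫ a, IRL.Apol T P ν β p r t s a * p t s a ∂ν = 0) ∧
    (∀ t, 1 ≤ t → t ≤ T - 1 → ∀ s a,
      ∫ s', (IRL.Vpol T P ν β p' r (t + 1) s'
          - ∫ s'', IRL.Vpol T P ν β p' r (t + 1) s'' ∂(P t (s, a))) ∂(P t (s, a)) = 0) ∧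
    -- (3) pairwise orthogonality in `L²(P^π)`
    (∀ t ∈ Finset.Icc 1 T, ∀ t' ∈ Finset.Icc 1 T, t ≠ t' →
      ∫ τ, X t τ * X t' τ ∂Ppi = 0) ∧
    (∀ t ∈ Finset.Icc 1 T, ∀ t' ∈ Finset.range T, ∫ τ, X t τ * Y t' τ ∂Ppi = 0) ∧
    (∀ t ∈ Finset.range T, ∀ t' ∈ Finset.range T, t ≠ t' →
      ∫ τ, Y t τ * Y t' τ ∂Ppi = 0) :=
  orthogonal_return_decomposition_general T hT P0 P ν β hβ r hr p hp hlog p' hp' hlog' Ppi hPpi G hG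
    X hX Y hY Yp hYp
end
end
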